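/- arXiv:2501.17806 — 7 statements merged into one kernel-verified Lean document; each statement's English description precedes it below -/
import Mathlib

section
/- Let G be a finite group and H ≤ G a subgroup. If H is mixable and the action of G on the coset space G/H is mixable (i.e., there is a random subproduct g₁^{ε₁}⋯g_k^{ε_k} in G such that the random coset g₁^{ε₁}⋯g_k^{ε_k}H is uniform on G/H), then G is mixable, and mixlen(G) ≤ mixlen(H) + mixlen(G, G/H). -/
open scoped Classical

/-- The distribution of the random subproduct `g 0 ^ ε 0 * ⋯ * g (k-1) ^ ε (k-1)`,
where `ε i` are independent Bernoulli variables with parameters `p i`. -/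
noncomputable def subprodDist {G : Type*} [Group G] {k : ℕ} (g : Fin k → G)
    (p : Fin k → ℝ) (a : G) : ℝ :=
  ∑ ε : Fin k → Bool,
    (∏ i : Fin k, if ε i then p i else 1 - p i) *
      (if (List.ofFn fun i => if ε i then g i else 1).prod = a then 1 else 0)

/-- `(g, p)` is a mixing sequence: valid probabilities whose random subproduct
is uniform on `G`. -/
def IsMixingSeq {G : Type*} [Group G] {k : ℕ} (g : Fin k → G) (p : Fin k → ℝ) : Prop :=
  (∀ i, 0 ≤ p i ∧ p i ≤ 1) ∧ ∀ a : G, subprodDist g p a = 1 / (Nat.card G : ℝ)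

/-- A group is mixable if it admits a mixing sequence. -/
def Mixable (G : Type*) [Group G] : Prop :=
  ∃ (k : ℕ) (g : Fin k → G) (p : Fin k → ℝ), IsMixingSeq g p

/-- The mixing length of a group: minimal length of a mixing sequence. -/
noncomputable def mixlen (G : Type*) [Group G] : ℕ :=
  sInf {k | ∃ (g : Fin k → G) (p : Fin k → ℝ), IsMixingSeq g p}

/-- The distribution on `X` obtained by applying a random subproduct to `x0`. -/
noncomputable def actDist {G X : Type*} [Group G] [MulAction G X] {k : ℕ}
    (g : Fin k → G) (p : Fin k → ℝ) (x0 y : X) : ℝ :=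
  ∑ ε : Fin k → Bool,
    (∏ i : Fin k, if ε i then p i else 1 - p i) *
      (if (List.ofFn fun i => if ε i then g i else 1).prod • x0 = y then 1 else 0)

/-- `(g, p)` is a mixing sequence for the action of `G` on `X` with base point `x0`. -/
def IsActMixing {G X : Type*} [Group G] [MulAction G X] {k : ℕ}
    (g : Fin k → G) (p : Fin k → ℝ) (x0 : X) : Prop :=
  (∀ i, 0 ≤ p i ∧ p i ≤ 1) ∧ ∀ y : X, actDist g p x0 y = 1 / (Nat.card X : ℝ)

/-- The action of `G` on `X` is mixable. -/
def MixableAction (G X : Type*) [Group G] [MulAction G X] : Prop :=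
  ∃ (k : ℕ) (g : Fin k → G) (p : Fin k → ℝ) (x0 : X), IsActMixing g p x0

/-- The mixing length of the action of `G` on `X`. -/
noncomputable def actMixlen (G X : Type*) [Group G] [MulAction G X] : ℕ :=
  sInf {k | ∃ (g : Fin k → G) (p : Fin k → ℝ) (x0 : X), IsActMixing g p x0}


/-! Write `x₀ = bH`. Running a mixing sequence for the action on `G ⧸ H` and then a mixing
sequence of `H` conjugated by `b` produces a product `A * B` of independent factors, where `A • x₀`
is uniform on `G ⧸ H` and `B` is uniform on the stabilizer `b H b⁻¹` of `x₀`. Now `A * B = a`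
exactly when `A • x₀ = a • x₀` and `B = A⁻¹ * a`, which has probability
`1 / |G ⧸ H| * 1 / |H| = 1 / |G|`. -/

def subprod {M : Type*} [Monoid M] {k : ℕ} (g : Fin k → M) (ε : Fin k → Bool) : M :=
  (List.ofFn fun i => if ε i then g i else 1).prod

def bernoulliWeight {k : ℕ} (p : Fin k → ℝ) (ε : Fin k → Bool) : ℝ :=
  ∏ i, if ε i then p i else 1 - p i

section Subproduct

variable {G : Type*} [Group G] {k : ℕ}

lemma subprodDist_eq (g : Fin k → G) (p : Fin k → ℝ) (a : G) :
    subprodDist g p a = ∑ ε, bernoulliWeight p ε * if subprod g ε = a then 1 else 0 :=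
  rfl

lemma actDist_eq {X : Type*} [MulAction G X] (g : Fin k → G) (p : Fin k → ℝ) (x₀ y : X) :
    actDist g p x₀ y = ∑ ε, bernoulliWeight p ε * if subprod g ε • x₀ = y then 1 else 0 :=
  rfl

lemma subprod_append {M : Type*} [Monoid M] {n m : ℕ} (g : Fin n → M) (g' : Fin m → M)
    (ε : Fin n → Bool) (ε' : Fin m → Bool) :
    subprod (Fin.append g g') (Fin.append ε ε') = subprod g ε * subprod g' ε' := by
  simp [subprod, List.ofFn_add, Fin.append_right]

lemma bernoulliWeight_append {n m : ℕ} (p : Fin n → ℝ) (p' : Fin m → ℝ)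
    (ε : Fin n → Bool) (ε' : Fin m → Bool) :
    bernoulliWeight (Fin.append p p') (Fin.append ε ε') =
      bernoulliWeight p ε * bernoulliWeight p' ε' := by
  simp [bernoulliWeight, Fin.prod_univ_add, Fin.append_left, Fin.append_right]

lemma subprod_map {M N F : Type*} [Monoid M] [Monoid N] [FunLike F M N] [MonoidHomClass F M N]
    (φ : F) (g : Fin k → M) (ε : Fin k → Bool) :
    subprod (fun i => φ (g i)) ε = φ (subprod g ε) := by
  simp only [subprod, map_list_prod, List.map_ofFn]
  refine congrArg _ (congrArg _ (funext fun i => ?_))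
  by_cases h : ε i <;> simp [h]

lemma subprodDist_append {n m : ℕ} (g : Fin n → G) (g' : Fin m → G) (p : Fin n → ℝ)
    (p' : Fin m → ℝ) (a : G) :
    subprodDist (Fin.append g g') (Fin.append p p') a =
      ∑ ε, bernoulliWeight p ε * subprodDist g' p' ((subprod g ε)⁻¹ * a) := by
  rw [subprodDist_eq, ← (Fin.appendEquiv n m).sum_comp, Fintype.sum_prod_type]
  refine Finset.sum_congr rfl fun ε _ => ?_
  rw [subprodDist_eq, Finset.mul_sum]
  refine Finset.sum_congr rfl fun ε' _ => ?_
  rw [show Fin.appendEquiv n m (ε, ε') = Fin.append ε ε' from rfl]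
  simp only [subprod_append, bernoulliWeight_append, ← eq_inv_mul_iff_mul_eq, mul_assoc]

lemma subprodDist_map_apply {K F : Type*} [Group K] [FunLike F G K] [MonoidHomClass F G K]
    (φ : F) (hφ : Function.Injective φ) (g : Fin k → G) (p : Fin k → ℝ) (x : G) :
    subprodDist (fun i => φ (g i)) p (φ x) = subprodDist g p x := by
  simp only [subprodDist_eq, subprod_map, hφ.eq_iff]

lemma subprodDist_map_of_notMem_range {K F : Type*} [Group K] [FunLike F G K]
    [MonoidHomClass F G K] (φ : F) (g : Fin k → G) (p : Fin k → ℝ) {a : K}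
    (ha : a ∉ Set.range φ) :
    subprodDist (fun i => φ (g i)) p a = 0 := by
  rw [subprodDist_eq]
  refine Finset.sum_eq_zero fun ε _ => ?_
  rw [subprod_map, if_neg fun h => ha ⟨_, h⟩, mul_zero]

end Subproduct

section Mixing

open MulAction

variable {G : Type*} [Group G]

lemma IsMixingSeq.map_mulEquiv {H K : Type*} [Group H] [Group K] {k : ℕ} {g : Fin k → H}
    {p : Fin k → ℝ} (hg : IsMixingSeq g p) (e : H ≃* K) : IsMixingSeq (fun i => e (g i)) p := by
  refine ⟨hg.1, fun a => ?_⟩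
  rw [← e.apply_symm_apply a, subprodDist_map_apply e e.injective, hg.2,
    Nat.card_congr e.toEquiv]

lemma subprodDist_subtype_of_isMixingSeq {K : Subgroup G} {k : ℕ} {g : Fin k → K}
    {p : Fin k → ℝ} (hg : IsMixingSeq g p) (a : G) :
    subprodDist (fun i => (g i : G)) p a = if a ∈ K then 1 / (Nat.card K : ℝ) else 0 := by
  by_cases ha : a ∈ K
  · rw [if_pos ha, ← hg.2 ⟨a, ha⟩]
    exact subprodDist_map_apply K.subtype K.subtype_injective g p ⟨a, ha⟩
  · rw [if_neg ha]
    exact subprodDist_map_of_notMem_range K.subtype g p (by simpa using ha)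

theorem IsActMixing.isMixingSeq_append {X : Type*} [MulAction G X] [IsPretransitive G X]
    {n m : ℕ} {g : Fin n → G} {p : Fin n → ℝ} {x₀ : X} (hp : IsActMixing g p x₀)
    {h : Fin m → stabilizer G x₀} {q : Fin m → ℝ} (hq : IsMixingSeq h q) :
    IsMixingSeq (Fin.append g fun i => (h i : G)) (Fin.append p q) := by
  refine ⟨fun i => Fin.addCases (fun i => by simpa using hp.1 i)
    (fun j => by simpa using hq.1 j) i, fun a => ?_⟩
  have hstab (ε : Fin n → Bool) :
      (subprod g ε)⁻¹ * a ∈ stabilizer G x₀ ↔ subprod g ε • x₀ = a • x₀ := by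
    rw [mem_stabilizer_iff, mul_smul, inv_smul_eq_iff, eq_comm]
  calc subprodDist (Fin.append g fun i => (h i : G)) (Fin.append p q) a
      = ∑ ε, bernoulliWeight p ε * (if subprod g ε • x₀ = a • x₀ then 1 else 0) /
          Nat.card (stabilizer G x₀) := by
        rw [subprodDist_append]
        refine Finset.sum_congr rfl fun ε _ => ?_
        rw [subprodDist_subtype_of_isMixingSeq hq]
        simp only [hstab]
        split_ifs <;> ring
    _ = actDist g p x₀ (a • x₀) / Nat.card (stabilizer G x₀) := by
        rw [actDist_eq, Finset.sum_div]
    _ = 1 / Nat.card G := by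
        rw [hp.2, div_div, ← Subgroup.index_mul_card (stabilizer G x₀),
          index_stabilizer_of_transitive, Nat.cast_mul]

lemma nonempty_mulEquiv_stabilizer_quotient (H : Subgroup G) (x : G ⧸ H) :
    Nonempty (H ≃* stabilizer G x) := by
  obtain ⟨b, rfl⟩ := QuotientGroup.mk_surjective x
  have hstab : stabilizer G (b : G ⧸ H) = H.map (MulAut.conj b).toMonoidHom := by
    simpa using stabilizer_smul_eq_stabilizer_map_conj b ((1 : G) : G ⧸ H)
  exact ⟨(H.equivMapOfInjective _ (MulAut.conj b).injective).trans
    (MulEquiv.subgroupCongr hstab.symm)⟩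

end Mixing

theorem mixable_of_subgroup_and_coset_action_general (G : Type*) [Group G]
    (H : Subgroup G) (hH : Mixable H) (hact : MixableAction G (G ⧸ H)) :
    Mixable G ∧ mixlen G ≤ mixlen H + actMixlen G (G ⧸ H) := by
  obtain ⟨h, q, hq⟩ : ∃ (h : Fin (mixlen H) → H) (q : Fin (mixlen H) → ℝ), IsMixingSeq h q :=
    Nat.sInf_mem hH
  obtain ⟨g, p, x₀, hp⟩ : ∃ (g : Fin (actMixlen G (G ⧸ H)) → G)
      (p : Fin (actMixlen G (G ⧸ H)) → ℝ) (x₀ : G ⧸ H), IsActMixing g p x₀ :=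
    Nat.sInf_mem hact
  obtain ⟨e⟩ := nonempty_mulEquiv_stabilizer_quotient H x₀
  have hmix := hp.isMixingSeq_append (hq.map_mulEquiv e)
  exact ⟨⟨_, _, _, hmix⟩, add_comm (mixlen H) _ ▸ Nat.sInf_le ⟨_, _, hmix⟩⟩

/-- If `H ≤ G` is mixable and the action of `G` on `G/H` is mixable, then `G`
is mixable and `mixlen G ≤ mixlen H + mixlen (G, G/H)`. -/
theorem mixable_of_subgroup_and_coset_action (G : Type*) [Group G] [Finite G]
    (H : Subgroup G) (hH : Mixable H) (hact : MixableAction G (G ⧸ H)) :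
    Mixable G ∧ mixlen G ≤ mixlen H + actMixlen G (G ⧸ H) :=
  mixable_of_subgroup_and_coset_action_general G H hH hact
end

section
/- Every finite 2-group G is mixable, and its mixing length equals log₂|G|. -/
/-!
A group of order `2 ^ (n + 1)` has a subgroup `H` of index two. Prepending a fair coin flip of
an element `t ∉ H` to a mixing sequence of `H` spreads the uniform distribution on `H` evenly
over the two cosets `H` and `tH`, so induction gives a mixing sequence of length `n`.
Conversely, a uniform distribution has full support, so the `2 ^ k` subproducts of a mixing
sequence of length `k` cover `G`, forcing `2 ^ n ≤ 2 ^ k`.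
-/

open scoped Classical

section Subproduct

variable {G G' : Type*} [Group G] [Group G'] {k : ℕ}

lemma subprodDist_cons (t : G) (g : Fin k → G) (q : ℝ) (p : Fin k → ℝ) (a : G) :
    subprodDist (Fin.cons t g) (Fin.cons q p) a
      = q * subprodDist g p (t⁻¹ * a) + (1 - q) * subprodDist g p a := by
  unfold subprodDist
  rw [← (Fin.consEquiv fun _ : Fin (k + 1) => Bool).sum_comp, Fintype.sum_prod_type,
    Fintype.sum_bool, Finset.mul_sum, Finset.mul_sum]
  congr 1 <;> refine Finset.sum_congr rfl fun ε _ => ?_ <;>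
    simp only [Fin.consEquiv_apply, Fin.prod_univ_succ, Fin.cons_zero, Fin.cons_succ,
      List.ofFn_succ, List.prod_cons, if_true, Bool.false_eq_true, if_false, one_mul, mul_assoc,
      eq_inv_mul_iff_mul_eq]

lemma map_subprod (f : G →* G') (g : Fin k → G) (ε : Fin k → Bool) :
    (List.ofFn fun i => if ε i then f (g i) else 1).prod
      = f (List.ofFn fun i => if ε i then g i else 1).prod := by
  simp only [map_list_prod, List.map_ofFn, Function.comp_def, apply_ite f, map_one]

lemma subprodDist_map_of_injective {f : G →* G'} (hf : Function.Injective f) (g : Fin k → G)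
    (p : Fin k → ℝ) (b : G) : subprodDist (f ∘ g) p (f b) = subprodDist g p b := by
  simp only [subprodDist, Function.comp_apply, map_subprod, hf.eq_iff]

lemma subprodDist_map_of_notMem_range_s7 (f : G →* G') (g : Fin k → G) (p : Fin k → ℝ) {a : G'}
    (ha : a ∉ f.range) : subprodDist (f ∘ g) p a = 0 := by
  refine Finset.sum_eq_zero fun ε _ => ?_
  rw [Function.comp_def, map_subprod, if_neg fun h => ha ⟨_, h⟩, mul_zero]

lemma exists_subprod_eq_of_subprodDist_ne_zero {g : Fin k → G} {p : Fin k → ℝ} {a : G}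
    (ha : subprodDist g p a ≠ 0) :
    ∃ ε : Fin k → Bool, (List.ofFn fun i => if ε i then g i else 1).prod = a := by
  by_contra! hne
  exact ha (Finset.sum_eq_zero fun ε _ => by rw [if_neg (hne ε), mul_zero])

end Subproduct

namespace IsMixingSeq

variable {G : Type*} [Group G] {k : ℕ} {g : Fin k → G} {p : Fin k → ℝ}

lemma card_le_two_pow [Finite G] (hm : IsMixingSeq g p) : Nat.card G ≤ 2 ^ k := by
  have hsurj : Function.Surjective
      fun ε : Fin k → Bool => (List.ofFn fun i => if ε i then g i else 1).prod := fun a =>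
    exists_subprod_eq_of_subprodDist_ne_zero <| by
      rw [hm.2 a]; have := Nat.card_pos (α := G); positivity
  simpa using Nat.card_le_card_of_surjective _ hsurj

lemma subprodDist_subtype {H : Subgroup G} {g : Fin k → H} (hm : IsMixingSeq g p) (a : G) :
    subprodDist (H.subtype ∘ g) p a = if a ∈ H then 1 / (Nat.card H : ℝ) else 0 := by
  split_ifs with ha
  · rw [← hm.2 ⟨a, ha⟩, ← subprodDist_map_of_injective H.subtype_injective]
    rfl
  · exact subprodDist_map_of_notMem_range_s7 _ _ _ (by simpa using ha)

lemma cons_of_index_eq_two {H : Subgroup G} (hH : H.index = 2) {g : Fin k → H}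
    (hm : IsMixingSeq g p) {t : G} (ht : t ∉ H) :
    IsMixingSeq (Fin.cons t (H.subtype ∘ g) : Fin (k + 1) → G) (Fin.cons (1 / 2) p) := by
  refine ⟨Fin.cases (by norm_num) hm.1, fun a => ?_⟩
  have hcard : (Nat.card G : ℝ) = Nat.card H * 2 := by
    rw [← H.card_mul_index, hH, Nat.cast_mul, Nat.cast_ofNat]
  have hcoset : t⁻¹ * a ∈ H ↔ a ∉ H := by
    rw [H.mul_mem_iff_of_index_two hH, H.inv_mem_iff]; tauto
  rw [subprodDist_cons, hm.subprodDist_subtype, hm.subprodDist_subtype, hcard]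
  by_cases ha : a ∈ H
  · rw [if_neg (by tauto), if_pos ha]; ring
  · rw [if_pos (hcoset.2 ha), if_neg ha]; ring

end IsMixingSeq

lemma Subgroup.exists_index_eq_two_of_card_eq_two_pow_succ {G : Type*} [Group G] [Finite G]
    {n : ℕ} (h : Nat.card G = 2 ^ (n + 1)) :
    ∃ H : Subgroup G, Nat.card H = 2 ^ n ∧ H.index = 2 := by
  have : Fact (Nat.Prime 2) := ⟨Nat.prime_two⟩
  obtain ⟨H, hH⟩ := Sylow.exists_subgroup_card_pow_prime 2 (h ▸ pow_dvd_pow 2 n.le_succ)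
  refine ⟨H, hH, Nat.eq_of_mul_eq_mul_left (pow_pos two_pos n) ?_⟩
  rw [← hH, H.card_mul_index, h, pow_succ, hH]

lemma exists_isMixingSeq_of_card_eq_two_pow {G : Type*} [Group G] [Finite G] {n : ℕ}
    (h : Nat.card G = 2 ^ n) : ∃ (g : Fin n → G) (p : Fin n → ℝ), IsMixingSeq g p := by
  induction n generalizing G with
  | zero =>
    have : Subsingleton G := (Nat.card_eq_one_iff_unique.mp h).1
    refine ⟨Fin.elim0, Fin.elim0, fun i => i.elim0, fun a => ?_⟩
    simp [subprodDist, Subsingleton.elim a 1]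
  | succ n ih =>
    obtain ⟨H, hcard, hindex⟩ := Subgroup.exists_index_eq_two_of_card_eq_two_pow_succ h
    obtain ⟨g, p, hm⟩ := ih hcard
    obtain ⟨t, ht, -⟩ := H.index_eq_two_iff_exists_notMem_and.mp hindex
    exact ⟨_, _, hm.cons_of_index_eq_two hindex ht⟩

/-- Every finite 2-group is mixable, and its mixing length equals `log₂ |G|`. -/
theorem mixable_two_group (G : Type*) [Group G] [Finite G] (n : ℕ)
    (h : Nat.card G = 2 ^ n) : Mixable G ∧ mixlen G = n := by
  obtain ⟨g, p, hm⟩ := exists_isMixingSeq_of_card_eq_two_pow h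
  refine ⟨⟨n, g, p, hm⟩, le_antisymm (Nat.sInf_le ⟨g, p, hm⟩) ?_⟩
  refine le_csInf ⟨n, g, p, hm⟩ fun k ⟨g', p', hm'⟩ => ?_
  exact (Nat.pow_le_pow_iff_right Nat.one_lt_two).mp (h ▸ hm'.card_le_two_pow)
end

section
/- A nontrivial finite group of odd order is not mixable; more generally, any finite group with a nontrivial quotient of odd order is not mixable. -/
open scoped Classical

/-!
The law of the random subproduct is the element `∏ᵢ (pᵢ gᵢ + (1 - pᵢ))` of the group algebra
`ℝ[G]`. If `|G|` is odd, every `gᵢ` has odd order `d`, so `pᵢ gᵢ + (1 - pᵢ)` divides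
`(pᵢ gᵢ)ᵈ + (1 - pᵢ)ᵈ = pᵢᵈ + (1 - pᵢ)ᵈ > 0` (the two terms commute), and the product is a
unit. The uniform law is fixed by right multiplication by every `b ∈ G`; cancelling the unit
gives `b = 1`. Mixing sequences push forward along surjections, which reduces the case of an
odd quotient to the quotient itself.
-/

open Finset MonoidAlgebra

theorem Commute.isUnit_add_of_odd {R : Type*} [Ring R] {x y : R} (h : Commute x y) {n : ℕ}
    (hn : Odd n) (hu : IsUnit (x ^ n + y ^ n)) : IsUnit (x + y) := by
  set c := ∑ i ∈ Finset.range n, x ^ i * (-y) ^ (n - 1 - i)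
  have hmul : (x + y) * c = x ^ n + y ^ n := by
    rw [← sub_neg_eq_add x y, h.neg_right.mul_geom_sum₂, hn.neg_pow, sub_neg_eq_add]
  have hc : Commute (x + y) c := .sum_right _ _ _ fun i _ =>
    (((Commute.refl x).add_left h.symm).pow_right i).mul_right
      ((h.add_left (.refl y)).neg_right.pow_right _)
  exact (hc.isUnit_mul_iff.mp (hmul ▸ hu)).1

theorem List.prod_ofFn_add {R : Type*} [Semiring R] :
    ∀ {k : ℕ} (A B : Fin k → R), (List.ofFn fun i => A i + B i).prod =
      ∑ ε : Fin k → Bool, (List.ofFn fun i => if ε i then A i else B i).prod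
  | 0, _, _ => by simp
  | k + 1, A, B => by
    rw [← (Fin.consEquiv fun _ => Bool).sum_comp, Fintype.sum_prod_type, Fintype.sum_bool,
      List.ofFn_succ, List.prod_cons, add_mul,
      List.prod_ofFn_add (fun i => A i.succ) (fun i => B i.succ), mul_sum, mul_sum]
    simp [Fin.consEquiv, List.ofFn_succ]

theorem MonoidAlgebra.list_prod_ofFn_single {R M : Type*} [CommSemiring R] [Monoid M] :
    ∀ {k : ℕ} (m : Fin k → M) (r : Fin k → R),
      (List.ofFn fun i => single (m i) (r i)).prod = single (List.ofFn m).prod (∏ i, r i)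
  | 0, _, _ => by simp [one_def]
  | k + 1, m, r => by
    rw [List.ofFn_succ, List.prod_cons, list_prod_ofFn_single, single_mul_single,
      List.ofFn_succ (f := m), List.prod_cons, Fin.prod_univ_succ]

theorem MonoidAlgebra.isUnit_single_add_single_one {G : Type*} [Group G] {h : G}
    (hh : Odd (orderOf h)) {p : ℝ} (hp0 : 0 ≤ p) (hp1 : p ≤ 1) :
    IsUnit (single h p + single 1 (1 - p) : MonoidAlgebra ℝ G) := by
  set d := orderOf h
  have hpos : 0 < p ^ d + (1 - p) ^ d := by
    rcases hp0.eq_or_lt with rfl | hp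
    · positivity
    · exact add_pos_of_pos_of_nonneg (pow_pos hp d) (pow_nonneg (by linarith) d)
  have hpow : (single h p) ^ d + (single 1 (1 - p) : MonoidAlgebra ℝ G) ^ d =
      algebraMap ℝ (MonoidAlgebra ℝ G) (p ^ d + (1 - p) ^ d) := by
    rw [single_pow, single_pow, pow_orderOf_eq_one, one_pow, ← single_add]
    rfl
  exact (single_commute_single (.one_right h) (.all _ _)).isUnit_add_of_odd hh
    (hpow ▸ (isUnit_iff_ne_zero.mpr hpos.ne').map _)

theorem MonoidHom.card_fiber_mul_natCard_of_surjective {G H : Type*} [Group G] [Group H]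
    [Fintype G] [DecidableEq H] {f : G →* H} (hf : Function.Surjective f) (c : H) :
    #{a | f a = c} * Nat.card H = Nat.card G := by
  have : Finite H := .of_surjective f hf
  cases nonempty_fintype H
  calc #{a | f a = c} * Nat.card H = ∑ c' : H, #{a | f a = c'} := by
        rw [sum_congr rfl fun c' _ => card_fiber_eq_of_mem_range f (hf c') (hf c), sum_const,
          card_univ, smul_eq_mul, Nat.card_eq_fintype_card, mul_comm]
    _ = Nat.card G := by
        rw [← card_eq_sum_card_fiberwise fun a _ => mem_univ (f a), card_univ,
          Nat.card_eq_fintype_card]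

section Subproduct

variable {G : Type*} [Group G] {k : ℕ} (g : Fin k → G) (p : Fin k → ℝ)

noncomputable def subprodElem : MonoidAlgebra ℝ G :=
  (List.ofFn fun i => single (g i) (p i) + single 1 (1 - p i)).prod

theorem subprodElem_eq_sum : subprodElem g p = ∑ ε : Fin k → Bool,
    single (List.ofFn fun i => if ε i then g i else 1).prod
      (∏ i, if ε i then p i else 1 - p i) := by
  rw [subprodElem, List.prod_ofFn_add]
  refine sum_congr rfl fun ε _ => ?_
  rw [← list_prod_ofFn_single]
  congr 2 with i
  split_ifs <;> rfl

theorem coeff_subprodElem (a : G) : (subprodElem g p).coeff a = subprodDist g p a := by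
  simp only [subprodElem_eq_sum, coeff_sum, sum_apply', coeff_single, Finsupp.single_apply,
    subprodDist, mul_ite, mul_one, mul_zero]

theorem isUnit_subprodElem [Finite G] (hG : Odd (Nat.card G)) (hp : ∀ i, 0 ≤ p i ∧ p i ≤ 1) :
    IsUnit (subprodElem g p) :=
  List.prod_isUnit <| by
    simp only [List.mem_ofFn, forall_exists_index, forall_apply_eq_imp_iff]
    exact fun i => isUnit_single_add_single_one (hG.of_dvd_nat (orderOf_dvd_natCard (g i)))
      (hp i).1 (hp i).2

variable {g p} in
theorem IsMixingSeq.subprodElem_mul_single (h : IsMixingSeq g p) (b : G) :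
    subprodElem g p * single b 1 = subprodElem g p := by
  ext a
  simp only [coeff_mul_single_apply, coeff_subprodElem, h.2, mul_one]

theorem subprodDist_comp {H : Type*} [Group H] [Fintype G] (f : G →* H) (c : H) :
    subprodDist (f ∘ g) p c = ∑ a with f a = c, subprodDist g p a := by
  have hprod : ∀ ε : Fin k → Bool, (List.ofFn fun i => if ε i then (f ∘ g) i else 1).prod =
      f (List.ofFn fun i => if ε i then g i else 1).prod := fun ε => by
    rw [map_list_prod, List.map_ofFn]
    congr 2 with i
    simp only [Function.comp_apply, apply_ite f, map_one]
  simp only [subprodDist, hprod]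
  rw [Finset.sum_comm]
  refine sum_congr rfl fun ε _ => ?_
  rw [← mul_sum, sum_ite_eq]
  simp only [mem_filter_univ]

end Subproduct

section Mixable

variable {G : Type*} [Group G]

theorem IsMixingSeq.comp_of_surjective [Finite G] {H : Type*} [Group H] {f : G →* H}
    (hf : Function.Surjective f) {k : ℕ} {g : Fin k → G} {p : Fin k → ℝ}
    (h : IsMixingSeq g p) : IsMixingSeq (f ∘ g) p := by
  cases nonempty_fintype G
  refine ⟨h.1, fun c => ?_⟩
  have hcard : (#{a | f a = c} : ℝ) * Nat.card H = Nat.card G := by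
    exact_mod_cast MonoidHom.card_fiber_mul_natCard_of_surjective hf c
  have hH : (Nat.card H : ℝ) ≠ 0 := by
    have : Finite H := .of_surjective f hf
    exact_mod_cast Nat.card_pos.ne'
  rw [subprodDist_comp, sum_congr rfl fun a _ => h.2 a, sum_const, nsmul_eq_mul]
  field_simp
  exact hcard

theorem Mixable.of_surjective [Finite G] {H : Type*} [Group H] {f : G →* H}
    (hf : Function.Surjective f) (h : Mixable G) : Mixable H :=
  let ⟨_, g, p, hgp⟩ := h
  ⟨_, f ∘ g, p, hgp.comp_of_surjective hf⟩

theorem not_mixable_of_odd_card [Finite G] [Nontrivial G] (hG : Odd (Nat.card G)) :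
    ¬ Mixable G := by
  rintro ⟨k, g, p, hgp⟩
  obtain ⟨b, hb⟩ := exists_ne (1 : G)
  have hb1 : single b (1 : ℝ) = single 1 1 :=
    (isUnit_subprodElem g p hG hgp.1).mul_eq_left.mp (hgp.subprodElem_mul_single b)
  exact hb ((single_left_injective one_ne_zero) hb1)

end Mixable

/-- A nontrivial finite group of odd order is not mixable; more generally, a
finite group with a nontrivial quotient of odd order is not mixable. -/
theorem not_mixable_of_odd_quotient (G : Type*) [Group G] [Finite G] :
    (Nontrivial G → Odd (Nat.card G) → ¬ Mixable G) ∧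
    (∀ N : Subgroup G, N.Normal → N ≠ ⊤ → Odd (Nat.card (G ⧸ N)) → ¬ Mixable G) := by
  refine ⟨fun _ hG => not_mixable_of_odd_card hG, fun N _ hN hQ hG => ?_⟩
  have : Nontrivial (G ⧸ N) := QuotientGroup.nontrivial_iff.mpr hN
  exact not_mixable_of_odd_card hQ (hG.of_surjective (QuotientGroup.mk'_surjective N))
end

section
/- A finite group G has no proper normal subgroup of odd index (i.e., G is 2'-simple) if and only if G has a subnormal series 1 = I₀ ⊴ I₁ ⊴ ⋯ ⊴ I_t = G in which every quotient I_{j+1}/I_j is generated by elements of order 2. -/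
/-!
Adjoining to a normal subgroup `N` all square roots of its elements gives a normal subgroup
`sqrtClosure N` over which `sqrtClosure N / N` is generated by involutions. Iterating from `⊥`
produces such a series; it stabilises at some `N` containing every square root of its elements,
so `G ⧸ N` has no involution, hence odd order by Cauchy, and `N = G` when `G` is `2'`-simple.
Conversely, `G ⧸ N` of odd order has no involutions, so a normal subgroup of odd index
absorbs each step of such a series and therefore contains `G`.
-/

/-- For subgroups `A ≤ B` with `A` normal in `B`, this says that the quotient
`B/A` is generated by its elements of order `2`: `B` is generated by `A`
together with the elements of `B` whose image in `B/A` has order exactly `2`. -/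
def QuotTwoGen {G : Type*} [Group G] (A B : Subgroup G) : Prop :=
  B = Subgroup.closure ((A : Set G) ∪ {x : G | x ∈ B ∧ x ^ 2 ∈ A ∧ x ∉ A})

theorem Function.exists_iterate_fixed_of_le_self {α : Type*} [PartialOrder α] [WellFoundedGT α]
    {f : α → α} (hf : ∀ a, a ≤ f a) (a : α) : ∃ n, f (f^[n] a) = f^[n] a := by
  have hmono : Monotone (f^[·] a) := monotone_nat_of_le_succ fun n => by
    rw [Function.iterate_succ_apply']
    exact hf _
  obtain ⟨n, hn⟩ := WellFoundedGT.monotone_chain_condition ⟨_, hmono⟩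
  refine ⟨n, ?_⟩
  simpa [Function.iterate_succ_apply'] using (hn (n + 1) n.le_succ).symm

namespace Subgroup

variable {G : Type*} [Group G]

theorem mem_of_pow_mem_of_coprime_index {N : Subgroup G} [N.Normal] {x : G} {n : ℕ}
    (hn : n.Coprime N.index) (hx : x ^ n ∈ N) : x ∈ N := by
  rw [← QuotientGroup.eq_one_iff] at hx ⊢
  have hindex : (x : G ⧸ N) ^ N.index = 1 := by
    rw [← QuotientGroup.mk_pow, QuotientGroup.eq_one_iff]
    exact N.pow_index_mem x
  simpa [hn] using pow_gcd_eq_one.mpr ⟨hx, hindex⟩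

def sqrtClosure (N : Subgroup G) : Subgroup G :=
  closure {x | x ^ 2 ∈ N}

theorem le_sqrtClosure (N : Subgroup G) : N ≤ sqrtClosure N :=
  fun _ hx => subset_closure (N.pow_mem hx 2)

instance sqrtClosure.normal (N : Subgroup G) [N.Normal] : (sqrtClosure N).Normal := by
  have hroots : normalizer {x : G | x ^ 2 ∈ N} = ⊤ := eq_top_iff.mpr fun g _ =>
    mem_set_normalizer_iff.mpr fun x => by
      simp only [Set.mem_ofPred_eq, conj_pow]
      exact mem_set_normalizer_iff.mp (normalizer_eq_top (H := N) ▸ mem_top g) _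
  rw [← normalizer_eq_top_iff, eq_top_iff, ← hroots]
  exact normalizer_le_normalizer_closure _

theorem quotTwoGen_sqrtClosure (N : Subgroup G) : QuotTwoGen N (sqrtClosure N) := by
  refine le_antisymm (closure_mono fun x hx => ?_) (closure_le _ |>.mpr ?_)
  · by_cases hxN : x ∈ N
    · exact Or.inl hxN
    · exact Or.inr ⟨subset_closure hx, hx, hxN⟩
  · rintro x (hx | ⟨hx, -⟩)
    exacts [le_sqrtClosure N hx, hx]

theorem odd_index_of_sqrtClosure_le {N : Subgroup G} [N.Normal] [N.FiniteIndex]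
    (h : sqrtClosure N ≤ N) : Odd N.index := by
  rw [← Nat.not_even_iff_odd, even_iff_two_dvd, index_eq_card]
  intro htwo
  have : Fact (Nat.Prime 2) := ⟨Nat.prime_two⟩
  obtain ⟨y, hy⟩ := exists_prime_orderOf_dvd_card' (G := G ⧸ N) 2 htwo
  obtain ⟨x, rfl⟩ := QuotientGroup.mk_surjective y
  have hx : x ^ 2 ∈ N := by
    rw [← QuotientGroup.eq_one_iff, QuotientGroup.mk_pow, ← hy, pow_orderOf_eq_one]
  have : (x : G ⧸ N) = 1 := (QuotientGroup.eq_one_iff x).mpr (h (subset_closure hx))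
  simp [this] at hy

end Subgroup

theorem QuotTwoGen.le_of_le {G : Type*} [Group G] {A B N : Subgroup G} [N.Normal]
    (h : QuotTwoGen A B) (hN : Odd N.index) (hA : A ≤ N) : B ≤ N := by
  rw [h, Subgroup.closure_le]
  rintro x (hx | ⟨-, hx, -⟩)
  exacts [hA hx, Subgroup.mem_of_pow_mem_of_coprime_index (Nat.coprime_two_left.mpr hN) (hA hx)]

/-- A finite group `G` is `2'`-simple (has no proper normal subgroup of odd
index) iff it has a subnormal series `1 = I₀ ⊴ I₁ ⊴ ⋯ ⊴ I_t = G` in which each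
quotient `I_{j+1}/I_j` is generated by elements of order `2`. -/
theorem two_prime_simple_iff_subnormal_series (G : Type*) [Group G] [Finite G] :
    (∀ N : Subgroup G, N.Normal → Odd N.index → N = ⊤) ↔
      ∃ (t : ℕ) (I : Fin (t + 1) → Subgroup G),
        I 0 = ⊥ ∧ I (Fin.last t) = ⊤ ∧
        (∀ j : Fin t, I j.castSucc ≤ I j.succ) ∧
        (∀ j : Fin t, ∀ x ∈ I j.succ, ∀ n ∈ I j.castSucc, x * n * x⁻¹ ∈ I j.castSucc) ∧
        (∀ j : Fin t, QuotTwoGen (I j.castSucc) (I j.succ)) := by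
  constructor
  · intro hsimple
    set I : ℕ → Subgroup G := (Subgroup.sqrtClosure^[·] ⊥)
    have hsucc (k : ℕ) : I (k + 1) = (I k).sqrtClosure := Function.iterate_succ_apply' ..
    have hnormal (k : ℕ) : (I k).Normal := by
      induction k with
      | zero => exact Subgroup.normal_bot
      | succ k ih => rw [hsucc]; infer_instance
    obtain ⟨t, ht⟩ := Function.exists_iterate_fixed_of_le_self Subgroup.le_sqrtClosure (⊥ : Subgroup G)
    have htop : I t = ⊤ := hsimple _ (hnormal t) (Subgroup.odd_index_of_sqrtClosure_le ht.le)
    refine ⟨t, fun j => I j, rfl, htop, fun j => ?_, fun j x _ n hn => (hnormal j).conj_mem n hn x,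
      fun j => ?_⟩
    · simpa [hsucc] using Subgroup.le_sqrtClosure (I j)
    · simpa [hsucc] using Subgroup.quotTwoGen_sqrtClosure (I j)
  · rintro ⟨t, I, hbot, htop, -, -, hgen⟩ N hN hodd
    have hle (j : Fin (t + 1)) : I j ≤ N := by
      induction j using Fin.induction with
      | zero => simp [hbot]
      | succ j ih => exact (hgen j).le_of_le hodd ih
    exact eq_top_iff.mpr (htop ▸ hle (Fin.last t))
end

section
/- A finite group G is 2'-simple (has no nontrivial odd-order quotient) if and only if for every nontrivial complex representation ρ of G there exists g ∈ G such that −1 is an eigenvalue of ρ(g). -/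
/-!
An involution `f` with `f ≠ 1` has the `-1`-eigenvector `v - f v` for any `v` it moves. So if no
`ρ g` has eigenvalue `-1`, then `ρ` kills every element of order two modulo `ker ρ`; by Cauchy,
`G ⧸ ker ρ` has odd order, and `2'`-simplicity forces `ρ = 1`. Conversely, every element of an
odd-order group `Q` satisfies `q ^ |Q| = 1`, so no eigenvalue of `q` in any representation is
`-1`; the regular representation of a nontrivial odd quotient `G ⧸ N` is then a counterexample.
-/

namespace Module.End

theorem eq_one_of_mul_self_eq_one_of_not_hasEigenvalue_neg_one {R M : Type*} [CommRing R]
    [AddCommGroup M] [Module R M] {f : Module.End R M} (hf : f * f = 1)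
    (h : ¬ f.HasEigenvalue (-1)) : f = 1 := by
  by_contra hne
  obtain ⟨v, hv⟩ : ∃ v, f v ≠ v := by
    by_contra! hfix
    exact hne (LinearMap.ext hfix)
  have hff : f (f v) = v := by simpa using congr($hf v)
  refine h (hasEigenvalue_of_hasEigenvector
    ⟨mem_eigenspace_iff.mpr ?_, sub_ne_zero.mpr hv.symm⟩)
  rw [map_sub, hff, neg_one_smul, neg_sub]

theorem not_hasEigenvalue_neg_one_of_pow_eq_one {K V : Type*} [Field K] [NeZero (2 : K)]
    [AddCommGroup V] [Module K V] {f : Module.End K V} {n : ℕ} (hf : f ^ n = 1) (hn : Odd n) :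
    ¬ f.HasEigenvalue (-1) := by
  intro h
  obtain ⟨v, hv⟩ := h.exists_hasEigenvector
  have hv_neg : v = -v := by simpa [hf, hn.neg_one_pow] using hv.pow_apply n
  rw [eq_neg_iff_add_eq_zero, ← two_smul K, smul_eq_zero] at hv_neg
  exact hv.2 (hv_neg.resolve_left two_ne_zero)

end Module.End

theorem Subgroup.exists_notMem_sq_mem_of_two_dvd_index {G : Type*} [Group G] (N : Subgroup G)
    [N.Normal] [N.FiniteIndex] (h : 2 ∣ N.index) : ∃ g ∉ N, g ^ 2 ∈ N := by
  have : Fact (Nat.Prime 2) := ⟨Nat.prime_two⟩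
  obtain ⟨q, hq⟩ := exists_prime_orderOf_dvd_card' (G := G ⧸ N) 2 (N.index_eq_card ▸ h)
  obtain ⟨g, rfl⟩ := QuotientGroup.mk_surjective q
  refine ⟨g, fun hg => ?_, ?_⟩
  · simp [(QuotientGroup.eq_one_iff g).mpr hg] at hq
  · rw [← QuotientGroup.eq_one_iff, QuotientGroup.mk_pow, ← hq, pow_orderOf_eq_one]

namespace Representation

theorem odd_index_ker_of_forall_not_hasEigenvalue_neg_one {R G V : Type*} [CommRing R] [Group G]
    [Finite G] [AddCommGroup V] [Module R V] (ρ : Representation R G V)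
    (h : ∀ g, ¬ Module.End.HasEigenvalue (ρ g) (-1)) : Odd ρ.ker.index := by
  refine Nat.odd_iff.mpr ?_
  by_contra heven
  obtain ⟨g, hg, hg2⟩ := ρ.ker.exists_notMem_sq_mem_of_two_dvd_index (by omega)
  exact hg (Module.End.eq_one_of_mul_self_eq_one_of_not_hasEigenvalue_neg_one
    (by rwa [← map_mul, ← sq]) (h g))

variable {k G V : Type*} [CommSemiring k] [Group G] [AddCommMonoid V] [Module k V]

theorem pow_card_eq_one [Finite G] (ρ : Representation k G V) (g : G) :
    ρ g ^ Nat.card G = 1 := by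
  rw [← map_pow, pow_card_eq_one', map_one]

theorem leftRegular_eq_one_iff [Nontrivial k] (g : G) : leftRegular k G g = 1 ↔ g = 1 := by
  refine ⟨fun h => ?_, fun h => h ▸ map_one _⟩
  simpa [MonoidAlgebra.single_left_inj one_ne_zero] using congr($h (MonoidAlgebra.single 1 1))

end Representation

/-- A finite group `G` is `2'`-simple (no proper normal subgroup of odd index,
equivalently no nontrivial odd-order quotient) iff every nontrivial
finite-dimensional complex representation of `G` has an element whose image
has `-1` as an eigenvalue. -/
theorem two_prime_simple_iff_neg_one_eigenvalue (G : Type*) [Group G] [Finite G] :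
    (∀ N : Subgroup G, N.Normal → Odd N.index → N = ⊤) ↔
      ∀ (V : Type) [AddCommGroup V] [Module ℂ V] [FiniteDimensional ℂ V]
        (ρ : Representation ℂ G V), ρ ≠ 1 →
          ∃ g : G, Module.End.HasEigenvalue (ρ g) (-1) := by
  constructor
  · intro h V _ _ _ ρ hρ
    by_contra! hρg
    exact hρ (MonoidHom.ker_eq_top_iff.mp
      (h _ inferInstance (ρ.odd_index_ker_of_forall_not_hasEigenvalue_neg_one hρg)))
  · intro h N _ hN
    by_contra hN_top
    -- `V` must live in `Type`, so the regular representation of `G ⧸ N` is built on a copy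
    -- of `G ⧸ N` in `Type`.
    let Q := Shrink.{0} (G ⧸ N)
    let φ : G →* Q :=
      (Shrink.mulEquiv.symm : G ⧸ N ≃* Q).toMonoidHom.comp (QuotientGroup.mk' N)
    have hQ : Nat.card Q = N.index := by
      rw [N.index_eq_card]
      exact Nat.card_congr (equivShrink _).symm
    obtain ⟨g, hg⟩ := h _ ((Representation.leftRegular ℂ Q).comp φ) fun hρ => hN_top <| by
      refine (Subgroup.eq_top_iff' N).mpr fun g => ?_
      have hφg : φ g = 1 := (Representation.leftRegular_eq_one_iff _).mp congr($hρ g)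
      simpa [φ] using hφg
    exact Module.End.not_hasEigenvalue_neg_one_of_pow_eq_one
      ((Representation.leftRegular ℂ Q).pow_card_eq_one (φ g)) (hQ ▸ hN) hg
end

section
/- Let ρ: G → GL_d(R) be a nontrivial irreducible real representation of a finite group G and let v ∈ R^d be a nonzero vector. Then there exist g ∈ G and p ∈ [0,1] such that the vector ((1−p)I + p·ρ(g))v lies in the orthogonal complement v^⊥. -/
/-!
Averaging over `G` projects onto the invariants, which vanish for a nontrivial irreducible `ρ`;
hence `∑ g, ⟪ρ g v, v⟫ = 0`. The term `g = 1` is `‖v‖² > 0`, so some `⟪ρ g v, v⟫` is negative,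
and along the segment from `v` to `ρ g v` the real function `p ↦ ⟪(1 - p) v + p ρ g v, v⟫`
changes sign, vanishing at `p = ‖v‖² / (‖v‖² - ⟪ρ g v, v⟫)`.
-/

open scoped RealInnerProductSpace

namespace Representation

variable {k G V : Type*} [CommRing k] [Group G] [AddCommGroup V] [Module k V]
  (ρ : Representation k G V)

lemma invariants_ne_top_of_ne_one (hρ : ρ ≠ 1) : ρ.invariants ≠ ⊤ := by
  intro htop
  refine hρ (MonoidHom.ext fun g => LinearMap.ext fun w => ?_)
  exact (htop ▸ Submodule.mem_top : w ∈ ρ.invariants) g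

lemma sum_apply_mem_invariants [Fintype G] (v : V) : ∑ g : G, ρ g v ∈ ρ.invariants := by
  intro h
  rw [map_sum]
  exact Fintype.sum_equiv (Equiv.mulLeft h) _ _ fun g => by simp

lemma sum_apply_eq_zero_of_invariants_eq_bot [Fintype G] (h : ρ.invariants = ⊥) (v : V) :
    ∑ g : G, ρ g v = 0 := by
  simpa [h] using ρ.sum_apply_mem_invariants v

end Representation

section InnerProduct

variable {E : Type*} [NormedAddCommGroup E] [InnerProductSpace ℝ E]

lemma exists_inner_apply_self_neg {G : Type*} [Group G] [Fintype G]
    (ρ : Representation ℝ G E) (hρ : ∀ w, ∑ g : G, ρ g w = 0) {v : E} (hv : v ≠ 0) :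
    ∃ g : G, ⟪ρ g v, v⟫ < 0 := by
  have hsum : ∑ g : G, -⟪ρ g v, v⟫ = 0 := by
    rw [Finset.sum_neg_distrib, ← sum_inner, hρ, inner_zero_left, neg_zero]
  have hone : -⟪ρ 1 v, v⟫ ≠ 0 := by simpa using hv
  obtain ⟨g, -, hg⟩ :=
    Finset.exists_pos_of_sum_zero_of_exists_nonzero _ hsum ⟨1, Finset.mem_univ _, hone⟩
  exact ⟨g, neg_pos.mp hg⟩

lemma inner_sub_smul_one_add_smul_apply (T : Module.End ℝ E) (p : ℝ) (v w : E) :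
    ⟪((1 - p) • (1 : Module.End ℝ E) + p • T) v, w⟫ = (1 - p) * ⟪v, w⟫ + p * ⟪T v, w⟫ := by
  simp only [LinearMap.add_apply, LinearMap.smul_apply, Module.End.one_apply, inner_add_left,
    real_inner_smul_left]

end InnerProduct

lemma exists_unitInterval_one_sub_mul_add_mul_eq_zero {a c : ℝ} (ha : 0 < a) (hc : c < 0) :
    ∃ p : ℝ, 0 ≤ p ∧ p ≤ 1 ∧ (1 - p) * a + p * c = 0 := by
  have hac : 0 < a - c := by linarith
  refine ⟨a / (a - c), by positivity, (div_le_one hac).mpr (by linarith), ?_⟩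
  field_simp
  ring

/-- Let `ρ` be a nontrivial irreducible real representation of a finite group
`G` on `ℝ^d` (with the standard inner product) and let `v ≠ 0`. Then there are
`g ∈ G` and `p ∈ [0,1]` such that `((1-p)·I + p·ρ(g)) v` is orthogonal to `v`. -/
theorem exists_send_to_orthogonal (G : Type*) [Group G] [Finite G] (d : ℕ)
    (ρ : Representation ℝ G (EuclideanSpace ℝ (Fin d)))
    (hirr : ∀ W : Submodule ℝ (EuclideanSpace ℝ (Fin d)),
      (∀ g : G, ∀ w ∈ W, ρ g w ∈ W) → W = ⊥ ∨ W = ⊤)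
    (hnt : ρ ≠ 1) (v : EuclideanSpace ℝ (Fin d)) (hv : v ≠ 0) :
    ∃ (g : G) (p : ℝ), 0 ≤ p ∧ p ≤ 1 ∧
      (inner ℝ (((1 - p) • (1 : Module.End ℝ (EuclideanSpace ℝ (Fin d))) + p • ρ g) v) v
        : ℝ) = 0 := by
  have : Fintype G := Fintype.ofFinite G
  have hinv : ρ.invariants = ⊥ :=
    (hirr ρ.invariants fun g w hw => (hw g).symm ▸ hw).resolve_right
      (Representation.invariants_ne_top_of_ne_one ρ hnt)
  obtain ⟨g, hg⟩ := exists_inner_apply_self_neg ρ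
    (Representation.sum_apply_eq_zero_of_invariants_eq_bot ρ hinv) hv
  obtain ⟨p, hp₀, hp₁, hp⟩ :=
    exists_unitInterval_one_sub_mul_add_mul_eq_zero (real_inner_self_pos.mpr hv) hg
  exact ⟨g, p, hp₀, hp₁, by rw [inner_sub_smul_one_add_smul_apply, hp]⟩
end

section
/- Let G be a finite group acting 2-transitively on a finite set X, and let H = Stab_G(x) for some x ∈ X. If the action of H on X∖{x} is mixable, then the action of G on X is mixable, with mixlen(G, X) ≤ mixlen(H, X∖{x}) + 1. -/
open scoped Classical

/-- The stabilizer of `x` acts on the complement `X ∖ {x}`. -/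
instance stabilizerComplAction {G X : Type*} [Group G] [MulAction G X] (x : X) :
    MulAction (MulAction.stabilizer G x) {y : X // y ≠ x} where
  smul g y := ⟨(g : G) • (y : X), fun h => y.2 (MulAction.injective (g : G)
    (h.trans (g.2 : (g : G) • x = x).symm))⟩
  one_smul y := Subtype.ext (one_smul G (y : X))
  mul_smul g h y := Subtype.ext (mul_smul (g : G) (h : G) (y : X))

/-!
Take a mixing sequence for `Stab_G(x)` on `X ∖ {x}` based at `y₀`, and append one last factor
`s` with `s • x = y₀`, used with probability `1 - 1/|X|`; being last, `s` acts first on the base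
point `x`. With probability `1/|X|` the walk stays at `x`, which the stabilizer part then fixes;
otherwise it moves to `y₀`, and the stabilizer part spreads it uniformly over `X ∖ {x}`.
-/

section ActDist

variable {G X : Type*} [Group G] [MulAction G X] {k : ℕ}

lemma sum_prod_bernoulli (p : Fin k → ℝ) :
    ∑ ε : Fin k → Bool, ∏ i, (if ε i then p i else 1 - p i) = 1 := by
  rw [← Fintype.prod_sum (fun i (b : Bool) => if b then p i else 1 - p i)]
  simp

lemma actDist_snoc (g : Fin k → G) (s : G) (p : Fin k → ℝ) (q : ℝ) (x0 y : X) :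
    actDist (Fin.snoc g s) (Fin.snoc p q) x0 y =
      (1 - q) * actDist g p x0 y + q * actDist g p (s • x0) y := by
  unfold actDist
  rw [← (Fin.snocEquiv fun _ => Bool).sum_comp, Fintype.sum_prod_type, Fintype.sum_bool]
  simp only [Fin.snocEquiv_apply, Fin.prod_univ_castSucc, List.ofFn_succ', List.prod_concat,
    Fin.snoc_castSucc, Fin.snoc_last, mul_smul, Finset.mul_sum, if_true, Bool.false_eq_true,
    if_false, one_smul]
  rw [add_comm]
  congr 1 <;> exact Finset.sum_congr rfl fun _ _ => by ring

lemma actDist_of_forall_smul_eq (g : Fin k → G) (p : Fin k → ℝ) {x0 : X}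
    (hg : ∀ i, g i • x0 = x0) (y : X) :
    actDist g p x0 y = if x0 = y then 1 else 0 := by
  have hfix (ε : Fin k → Bool) :
      (List.ofFn fun i => if ε i then g i else 1).prod ∈ MulAction.stabilizer G x0 := by
    refine Subgroup.list_prod_mem _ fun a ha => ?_
    obtain ⟨i, rfl⟩ := List.mem_ofFn.mp ha
    split_ifs
    exacts [hg i, one_mem _]
  unfold actDist
  simp_rw [MulAction.mem_stabilizer_iff.mp (hfix _), ← Finset.sum_mul, sum_prod_bernoulli, one_mul]

end ActDist

section Subgroup

variable {G Y X : Type*} [Group G] [MulAction G X] {S : Subgroup G} [MulAction S Y] {k : ℕ}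
  {f : Y → X}

lemma subprod_coe_smul (hf : ∀ (h : S) (y : Y), f (h • y) = (h : G) • f y) (g : Fin k → S)
    (ε : Fin k → Bool) (y : Y) :
    (List.ofFn fun i => if ε i then (g i : G) else 1).prod • f y =
      f ((List.ofFn fun i => if ε i then g i else 1).prod • y) := by
  have hlist : (List.ofFn fun i => if ε i then (g i : G) else 1) =
      (List.ofFn fun i => if ε i then g i else 1).map (↑) := by
    simp only [List.map_ofFn, Function.comp_def, apply_ite Subtype.val, OneMemClass.coe_one]
  rw [hlist, ← SubmonoidClass.coe_list_prod, hf]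

lemma actDist_coe (hf : ∀ (h : S) (y : Y), f (h • y) = (h : G) • f y)
    (hinj : Function.Injective f) (g : Fin k → S) (p : Fin k → ℝ) (y0 y : Y) :
    actDist (fun i => (g i : G)) p (f y0) (f y) = actDist g p y0 y := by
  unfold actDist
  simp_rw [subprod_coe_smul hf, hinj.eq_iff]

lemma actDist_coe_eq_zero (hf : ∀ (h : S) (y : Y), f (h • y) = (h : G) • f y) {z : X}
    (hz : ∀ y, f y ≠ z) (g : Fin k → S) (p : Fin k → ℝ) (y0 : Y) :
    actDist (fun i => (g i : G)) p (f y0) z = 0 := by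
  unfold actDist
  simp_rw [subprod_coe_smul hf, if_neg (hz _), mul_zero, Finset.sum_const_zero]

end Subgroup

lemma Nat.card_subtype_ne_add_one {X : Type*} [Finite X] (x : X) :
    Nat.card {y : X // y ≠ x} + 1 = Nat.card X :=
  Finite.card_option.symm.trans (Nat.card_congr (Equiv.optionSubtypeNe x))

lemma isActMixing_snoc_of_stabilizer {G X : Type*} [Group G] [MulAction G X] [Finite X] {x : X}
    {k : ℕ} {g : Fin k → MulAction.stabilizer G x} {p : Fin k → ℝ} {y0 : {y : X // y ≠ x}}
    (hmix : IsActMixing g p y0) {s : G} (hs : s • x = y0) :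
    IsActMixing (Fin.snoc (fun i => (g i : G)) s) (Fin.snoc p (1 - 1 / Nat.card X)) x := by
  have hm : (0 : ℝ) < Nat.card {y : X // y ≠ x} := by
    have : Nonempty {y : X // y ≠ x} := ⟨y0⟩
    exact_mod_cast Nat.card_pos
  have hn : (Nat.card X : ℝ) = Nat.card {y : X // y ≠ x} + 1 := by
    exact_mod_cast (Nat.card_subtype_ne_add_one x).symm
  have hf (h : MulAction.stabilizer G x) (z : {y : X // y ≠ x}) :
      ((h • z : {y : X // y ≠ x}) : X) = (h : G) • (z : X) := rfl
  refine ⟨fun i => ?_, fun y => ?_⟩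
  · induction i using Fin.lastCases with
    | last =>
      have hn1 : (1 : ℝ) ≤ Nat.card X := by rw [hn]; linarith
      rw [Fin.snoc_last]
      exact ⟨sub_nonneg.mpr ((div_le_one (by linarith)).mpr hn1), sub_le_self _ (by positivity)⟩
    | cast i => simpa using hmix.1 i
  · rw [actDist_snoc, hs, actDist_of_forall_smul_eq _ _ fun i => (g i).2]
    by_cases hy : y = x
    · rw [hy, if_pos rfl, actDist_coe_eq_zero hf (fun z => z.2) g p y0]
      ring
    · rw [if_neg (Ne.symm hy), show y = ((⟨y, hy⟩ : {y : X // y ≠ x}) : X) from rfl,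
        actDist_coe hf Subtype.val_injective, hmix.2, hn]
      field_simp
      ring

theorem mixable_of_two_transitive_general (G X : Type*) [Group G] [MulAction G X]
    [Finite X]
    (h2t : ∀ x₁ x₂ y₁ y₂ : X, x₁ ≠ x₂ → y₁ ≠ y₂ →
      ∃ g : G, g • x₁ = y₁ ∧ g • x₂ = y₂)
    (x : X)
    (hH : MixableAction (MulAction.stabilizer G x) {y : X // y ≠ x}) :
    MixableAction G X ∧
      actMixlen G X ≤ actMixlen (MulAction.stabilizer G x) {y : X // y ≠ x} + 1 := by
  obtain ⟨g, p, y0, hmix⟩ := Nat.sInf_mem hH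
  obtain ⟨s, hs, -⟩ := h2t x y0 y0 x (Ne.symm y0.2) y0.2
  have hG := isActMixing_snoc_of_stabilizer hmix hs
  exact ⟨⟨_, _, _, x, hG⟩, Nat.sInf_le ⟨_, _, x, hG⟩⟩

/-- If `G` acts 2-transitively on a finite set `X` and the action of the
stabilizer `H = Stab_G(x)` on `X ∖ {x}` is mixable, then the action of `G` on
`X` is mixable, with `mixlen (G, X) ≤ mixlen (H, X ∖ {x}) + 1`. -/
theorem mixable_of_two_transitive (G X : Type*) [Group G] [MulAction G X]
    [Finite G] [Finite X]
    (h2t : ∀ x₁ x₂ y₁ y₂ : X, x₁ ≠ x₂ → y₁ ≠ y₂ →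
      ∃ g : G, g • x₁ = y₁ ∧ g • x₂ = y₂)
    (x : X)
    (hH : MixableAction (MulAction.stabilizer G x) {y : X // y ≠ x}) :
    MixableAction G X ∧
      actMixlen G X ≤ actMixlen (MulAction.stabilizer G x) {y : X // y ≠ x} + 1 :=
  mixable_of_two_transitive_general G X h2t x hH
end
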